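/- arXiv:2510.16337 — 2 statements merged into one kernel-verified Lean document; each statement's English description precedes it below -/
import Mathlib

section
/- Proximal operator of the group MCP penalty: Fix μ > 0 and γ > 1, and let ρ(t; μ, γ) = μ∫_0^t (1 − x/(μγ))_+ dx for t ≥ 0 be the minimax concave penalty. For any u ∈ R^R, define S_{μ,γ}(u) = (1 − μ/‖u‖₂)_+ u / (1 − 1/γ) if ‖u‖₂ < μγ, and S_{μ,γ}(u) = u if ‖u‖₂ ≥ μγ. Then S_{μ,γ}(u) is a global minimizer over v ∈ R^R of the function v ↦ (1/2)‖v − u‖₂² + ρ(‖v‖₂; μ, γ). -/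
/-!
`S u = groupThresh μ γ u` is a nonnegative multiple of `u`, so `‖S u - u‖ = |‖S u‖ - ‖u‖|`, while
`|‖v‖ - ‖u‖| ≤ ‖v - u‖` for every `v`. The problem therefore reduces to showing that `‖S u‖`
minimizes the scalar objective `t ↦ ½ (t - ‖u‖)² + ρ(t)` over `t ≥ 0`. On `[0, μγ]` the penalty
is `μ t - t² / (2γ)`, which makes the objective a convex quadratic with minimizer
`(‖u‖ - μ)₊ / (1 - 1/γ)` on `[0, ∞)`; beyond `μγ` the penalty is the constant `μ²γ/2`, so there
the best choice is `‖u‖` itself when `‖u‖ ≥ μγ`, and `μγ` otherwise.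
-/

/-- The minimax concave penalty (MCP): `ρ(t; μ, γ) = μ ∫_0^t (1 - x/(μγ))₊ dx`. -/
noncomputable def mcp (μ γ : ℝ) (t : ℝ) : ℝ :=
  μ * ∫ x in (0 : ℝ)..t, max (1 - x / (μ * γ)) 0

/-- The row-wise group soft-thresholding operator used in the Sparse STANE algorithm. -/
noncomputable def groupThresh {R : ℕ} (μ γ : ℝ) (u : EuclideanSpace ℝ (Fin R)) :
    EuclideanSpace ℝ (Fin R) :=
  if ‖u‖ < μ * γ then ((max (1 - μ / ‖u‖) 0) / (1 - 1 / γ)) • u else u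

open Set

theorem mcp_of_le_mul (μ γ : ℝ) {t : ℝ} (hμ : 0 < μ) (hγ : 0 < γ) (ht : 0 ≤ t) (htμγ : t ≤ μ * γ) :
    mcp μ γ t = μ * t - t ^ 2 / (2 * γ) := by
  have hμγ : 0 < μ * γ := mul_pos hμ hγ
  have hpos : EqOn (fun x => max (1 - x / (μ * γ)) 0) (fun x => 1 - x / (μ * γ)) (uIcc 0 t) := by
    intro x hx
    rw [uIcc_of_le ht] at hx
    exact max_eq_left (sub_nonneg.2 ((div_le_one hμγ).2 (hx.2.trans htμγ)))
  rw [mcp, intervalIntegral.integral_congr hpos,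
    intervalIntegral.integral_sub intervalIntegrable_const
      ((continuous_id'.div_const _).intervalIntegrable _ _)]
  simp only [intervalIntegral.integral_div, integral_id, intervalIntegral.integral_const]
  field_simp
  ring

theorem mcp_of_mul_le (μ γ : ℝ) {t : ℝ} (hμ : 0 < μ) (hγ : 0 < γ) (htμγ : μ * γ ≤ t) :
    mcp μ γ t = μ ^ 2 * γ / 2 := by
  have hμγ : 0 < μ * γ := mul_pos hμ hγ
  have hcont : Continuous fun x : ℝ => max (1 - x / (μ * γ)) 0 := by fun_prop
  have hzero : EqOn (fun x => max (1 - x / (μ * γ)) 0) 0 (uIcc (μ * γ) t) := by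
    intro x hx
    rw [uIcc_of_le htμγ] at hx
    exact max_eq_right (sub_nonpos.2 ((one_le_div hμγ).2 hx.1))
  have hcap : mcp μ γ t = mcp μ γ (μ * γ) := by
    rw [mcp, mcp, ← intervalIntegral.integral_add_adjacent_intervals (b := μ * γ)
      (hcont.intervalIntegrable _ _) (hcont.intervalIntegrable _ _),
      intervalIntegral.integral_congr hzero]
    simp
  rw [hcap, mcp_of_le_mul μ γ hμ hγ hμγ.le le_rfl]
  field_simp
  ring

theorem mcp_min (μ γ t : ℝ) (hμ : 0 < μ) (hγ : 0 < γ) :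
    mcp μ γ (min t (μ * γ)) = mcp μ γ t := by
  rcases le_total t (μ * γ) with h | h
  · rw [min_eq_left h]
  · rw [min_eq_right h, mcp_of_mul_le μ γ hμ hγ le_rfl, mcp_of_mul_le μ γ hμ hγ h]

theorem isMinOn_quadratic_Ici {κ : ℝ} (hκ : 0 < κ) (b : ℝ) :
    IsMinOn (fun t => κ / 2 * t ^ 2 - b * t) (Ici 0) (max b 0 / κ) := by
  refine isMinOn_iff.2 fun t (ht : 0 ≤ t) => ?_
  rcases le_total b 0 with hb | hb
  · simp only [max_eq_right hb, zero_div]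
    nlinarith [mul_nonneg ht (neg_nonneg.2 hb), mul_nonneg hκ.le (sq_nonneg t)]
  · have hsq : κ / 2 * t ^ 2 - b * t - (κ / 2 * (b / κ) ^ 2 - b * (b / κ)) =
        κ / 2 * (t - b / κ) ^ 2 := by
      field_simp
      ring
    simp only [max_eq_left hb]
    nlinarith [hsq, mul_nonneg hκ.le (sq_nonneg (t - b / κ))]

theorem isMinOn_mcp_objective_of_lt {μ γ a : ℝ} (hμ : 0 < μ) (hγ : 1 < γ) (ha : a < μ * γ) :
    IsMinOn (fun t => 1 / 2 * (t - a) ^ 2 + mcp μ γ t) (Ici 0) (max (a - μ) 0 / (1 - 1 / γ)) := by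
  have hγ₀ : 0 < γ := one_pos.trans hγ
  set κ := 1 - 1 / γ with hκ_def
  have hκ : 0 < κ := sub_pos.2 ((div_lt_one hγ₀).2 hγ)
  have hobj : ∀ x, 0 ≤ x → x ≤ μ * γ →
      1 / 2 * (x - a) ^ 2 + mcp μ γ x = κ / 2 * x ^ 2 - (a - μ) * x + a ^ 2 / 2 := by
    intro x hx₀ hx
    rw [mcp_of_le_mul μ γ hμ hγ₀ hx₀ hx, hκ_def]
    field_simp
    ring
  have hs₀ : 0 ≤ max (a - μ) 0 / κ := div_nonneg (le_max_right _ _) hκ.le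
  have hs : max (a - μ) 0 / κ ≤ μ * γ := by
    rw [div_le_iff₀ hκ]
    refine max_le ?_ (by positivity)
    rw [hκ_def]
    field_simp
    linarith
  refine isMinOn_iff.2 fun t (ht : 0 ≤ t) => ?_
  have ht' : 0 ≤ min t (μ * γ) := le_min ht (by positivity)
  -- clipping `t` at `μγ > a` moves it towards `a` and leaves the (constant) penalty unchanged
  have hclip : (min t (μ * γ) - a) ^ 2 ≤ (t - a) ^ 2 := by
    rcases le_total t (μ * γ) with h | h
    · rw [min_eq_left h]
    · rw [min_eq_right h]
      exact pow_le_pow_left₀ (by linarith) (by linarith) 2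
  calc 1 / 2 * (max (a - μ) 0 / κ - a) ^ 2 + mcp μ γ (max (a - μ) 0 / κ)
      = κ / 2 * (max (a - μ) 0 / κ) ^ 2 - (a - μ) * (max (a - μ) 0 / κ) + a ^ 2 / 2 :=
        hobj _ hs₀ hs
    _ ≤ κ / 2 * min t (μ * γ) ^ 2 - (a - μ) * min t (μ * γ) + a ^ 2 / 2 :=
        add_le_add_left (isMinOn_quadratic_Ici hκ (a - μ) (mem_Ici.2 ht')) _
    _ = 1 / 2 * (min t (μ * γ) - a) ^ 2 + mcp μ γ (min t (μ * γ)) :=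
        (hobj _ ht' (min_le_right _ _)).symm
    _ ≤ 1 / 2 * (t - a) ^ 2 + mcp μ γ t := by
        rw [mcp_min μ γ t hμ hγ₀]
        gcongr

theorem isMinOn_mcp_objective_of_le {μ γ a : ℝ} (hμ : 0 < μ) (hγ : 1 < γ) (ha : μ * γ ≤ a) :
    IsMinOn (fun t => 1 / 2 * (t - a) ^ 2 + mcp μ γ t) (Ici 0) a := by
  have hγ₀ : 0 < γ := one_pos.trans hγ
  refine isMinOn_iff.2 fun t (ht : 0 ≤ t) => ?_
  rw [sub_self, mcp_of_mul_le μ γ hμ hγ₀ ha]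
  rcases le_total t (μ * γ) with h | h
  · have hid : 1 / 2 * (t - a) ^ 2 + (μ * t - t ^ 2 / (2 * γ)) - μ ^ 2 * γ / 2 =
        1 / 2 * ((a - t) ^ 2 - (μ * γ - t) ^ 2) + (γ - 1) / (2 * γ) * (μ * γ - t) ^ 2 := by
      field_simp
      ring
    have hsq : (μ * γ - t) ^ 2 ≤ (a - t) ^ 2 := pow_le_pow_left₀ (by linarith) (by linarith) 2
    have hrest : 0 ≤ (γ - 1) / (2 * γ) * (μ * γ - t) ^ 2 :=
      mul_nonneg (div_nonneg (by linarith) (by positivity)) (sq_nonneg _)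
    rw [mcp_of_le_mul μ γ hμ hγ₀ ht h]
    linarith
  · rw [mcp_of_mul_le μ γ hμ hγ₀ h]
    nlinarith [sq_nonneg (t - a)]

noncomputable def mcpThresh (μ γ a : ℝ) : ℝ :=
  if a < μ * γ then max (a - μ) 0 / (1 - 1 / γ) else a

theorem isMinOn_mcpThresh {μ γ : ℝ} (hμ : 0 < μ) (hγ : 1 < γ) (a : ℝ) :
    IsMinOn (fun t => 1 / 2 * (t - a) ^ 2 + mcp μ γ t) (Ici 0) (mcpThresh μ γ a) := by
  unfold mcpThresh
  split_ifs with ha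
  · exact isMinOn_mcp_objective_of_lt hμ hγ ha
  · exact isMinOn_mcp_objective_of_le hμ hγ (not_lt.1 ha)

theorem one_sub_one_div_nonneg {γ : ℝ} (hγ : 1 ≤ γ) : 0 ≤ 1 - 1 / γ :=
  sub_nonneg.2 ((div_le_one (by linarith)).2 hγ)

theorem sameRay_groupThresh {R : ℕ} (μ : ℝ) {γ : ℝ} (hγ : 1 ≤ γ) (u : EuclideanSpace ℝ (Fin R)) :
    SameRay ℝ (groupThresh μ γ u) u := by
  unfold groupThresh
  split_ifs
  · exact SameRay.sameRay_nonneg_smul_left u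
      (div_nonneg (le_max_right _ _) (one_sub_one_div_nonneg hγ))
  · exact SameRay.refl u

theorem norm_groupThresh {R : ℕ} {μ γ : ℝ} (hμ : 0 ≤ μ) (hγ : 1 ≤ γ)
    (u : EuclideanSpace ℝ (Fin R)) : ‖groupThresh μ γ u‖ = mcpThresh μ γ ‖u‖ := by
  unfold groupThresh mcpThresh
  split_ifs
  · rw [norm_smul, Real.norm_of_nonneg (div_nonneg (le_max_right _ _) (one_sub_one_div_nonneg hγ)),
      div_mul_eq_mul_div, max_mul_of_nonneg _ _ (norm_nonneg u), zero_mul]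
    rcases eq_or_ne ‖u‖ 0 with hu | hu
    · simp [hu, hμ]
    · rw [sub_mul, div_mul_cancel₀ _ hu, one_mul]
  · rfl

/-- **Proximal operator of the group MCP penalty.**
For `μ > 0`, `γ > 1`, the thresholding operator `S_{μ,γ}(u)` is a global minimizer of
`v ↦ (1/2)‖v − u‖₂² + ρ(‖v‖₂; μ, γ)`. -/
theorem groupThresh_is_prox_mcp {R : ℕ} (μ γ : ℝ) (hμ : 0 < μ) (hγ : 1 < γ)
    (u : EuclideanSpace ℝ (Fin R)) :
    ∀ v : EuclideanSpace ℝ (Fin R),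
      (1 / 2) * ‖groupThresh μ γ u - u‖ ^ 2 + mcp μ γ ‖groupThresh μ γ u‖ ≤
        (1 / 2) * ‖v - u‖ ^ 2 + mcp μ γ ‖v‖ := by
  intro v
  calc (1 / 2) * ‖groupThresh μ γ u - u‖ ^ 2 + mcp μ γ ‖groupThresh μ γ u‖
      = 1 / 2 * (mcpThresh μ γ ‖u‖ - ‖u‖) ^ 2 + mcp μ γ (mcpThresh μ γ ‖u‖) := by
        rw [(sameRay_groupThresh μ hγ.le u).norm_sub, sq_abs, norm_groupThresh hμ.le hγ.le]
    _ ≤ 1 / 2 * (‖v‖ - ‖u‖) ^ 2 + mcp μ γ ‖v‖ :=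
        isMinOn_mcpThresh hμ hγ ‖u‖ (mem_Ici.2 (norm_nonneg v))
    _ ≤ (1 / 2) * ‖v - u‖ ^ 2 + mcp μ γ ‖v‖ := by
        rw [← sq_abs (‖v‖ - ‖u‖)]
        gcongr
        exact abs_norm_sub_norm_le v u
end

section
/- Gradient of the negative log-likelihood with respect to the temporal weights: Fix a symmetric matrix A ∈ R^{N×N}, a symmetric matrix S ∈ R^{N×N}, and a matrix U ∈ R^{N×R_D}, and define f : R^{R_D} → R by f(v) = −Σ_{i=1}^N Σ_{j=1}^N [A_ij Θ_ij(v) − log(1 + exp(Θ_ij(v)))] with Θ(v) = S + U diag(v) Uᵀ, where diag(v) is the diagonal matrix with diagonal entries v_1,…,v_{R_D}. Then f is differentiable, and for each r = 1,…,R_D its partial derivative satisfies ∂f/∂v_r = −u_rᵀ (A − σ(Θ(v))) u_r, where u_r is the r-th column of U and σ(x) = 1/(1+e^{−x}) is applied entrywise; equivalently, the gradient of f at v is −diag[Uᵀ(A − σ(Θ(v)))U], the vector of diagonal entries of Uᵀ(A − σ(Θ(v)))U. -/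
/-!
The negative log-likelihood is a sum over entries of the softplus loss `log (1 + exp θ) - a θ`,
whose derivative in `θ` is `σ(θ) - a`, composed with the entries of `Θ(v)`, which are linear
in `v`: `Θ(v)ᵢⱼ = Sᵢⱼ + ∑ᵣ Uᵢᵣ Uⱼᵣ vᵣ`. The chain rule and an exchange of the sums over
`i, j` and `r` give the formula.
-/

open Matrix

noncomputable def logistic (x : ℝ) : ℝ := 1 / (1 + Real.exp (-x))

noncomputable def logisticM {N : ℕ} (M : Matrix (Fin N) (Fin N) ℝ) :
    Matrix (Fin N) (Fin N) ℝ :=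
  Matrix.of fun i j => logistic (M i j)

theorem logistic_eq_exp_div (x : ℝ) : logistic x = Real.exp x / (1 + Real.exp x) := by
  have : 1 + Real.exp x ≠ 0 := by positivity
  rw [logistic, Real.exp_neg]
  field_simp
  ring

theorem hasDerivAt_log_one_add_exp (x : ℝ) :
    HasDerivAt (fun y => Real.log (1 + Real.exp y)) (logistic x) x := by
  rw [logistic_eq_exp_div]
  exact ((Real.hasDerivAt_exp x).const_add 1).log (by positivity)

theorem hasDerivAt_mul_sub_log_one_add_exp (a x : ℝ) :
    HasDerivAt (fun t => a * t - Real.log (1 + Real.exp t)) (a - logistic x) x := by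
  simpa using (hasDerivAt_const_mul a).fun_sub (hasDerivAt_log_one_add_exp x)

theorem HasFDerivAt.sum_logistic_negLogLik {E ι κ : Type*} [NormedAddCommGroup E]
    [NormedSpace ℝ E] [Fintype ι] [Fintype κ] {a : ι → κ → ℝ} {θ : E → ι → κ → ℝ}
    {θ' : ι → κ → E →L[ℝ] ℝ} {x : E} (hθ : ∀ i j, HasFDerivAt (fun y => θ y i j) (θ' i j) x) :
    HasFDerivAt (fun y => -∑ i, ∑ j, (a i j * θ y i j - Real.log (1 + Real.exp (θ y i j))))
      (-∑ i, ∑ j, (a i j - logistic (θ x i j)) • θ' i j) x :=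
  .neg <| .fun_sum fun i _ => .fun_sum fun j _ =>
    (hasDerivAt_mul_sub_log_one_add_exp (a i j) (θ x i j)).comp_hasFDerivAt
      (f := fun y => θ y i j) x (hθ i j)

section Sandwich

variable {m n : Type*} [Fintype n] (U : Matrix m n ℝ)

theorem mul_diagonal_mul_transpose_apply [DecidableEq n] (v : n → ℝ) (i j : m) :
    (U * diagonal v * Uᵀ) i j = ∑ r, U i r * U j r * v r := by
  rw [mul_apply]
  simp only [mul_diagonal, transpose_apply]
  exact Finset.sum_congr rfl fun r _ => by ring

theorem hasFDerivAt_mul_diagonal_mul_transpose_apply [DecidableEq n] (v : n → ℝ) (i j : m) :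
    HasFDerivAt (fun v => (U * diagonal v * Uᵀ) i j)
      (∑ r, (U i r * U j r) • ContinuousLinearMap.proj (R := ℝ) (φ := fun _ : n => ℝ) r) v := by
  simp only [mul_diagonal_mul_transpose_apply]
  exact .fun_sum fun r _ => (hasFDerivAt_apply r v).const_mul _

theorem sum_sum_mul_sum_mul_mul [Fintype m] (C : Matrix m m ℝ) (w : n → ℝ) :
    ∑ i, ∑ j, C i j * ∑ r, U i r * U j r * w r = ∑ r, (∑ i, ∑ j, U i r * C i j * U j r) * w r := by
  simp only [Finset.mul_sum, Finset.sum_mul]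
  rw [Finset.sum_comm (s := Finset.univ (α := n))]
  refine Finset.sum_congr rfl fun i _ => ?_
  rw [Finset.sum_comm (s := Finset.univ (α := n))]
  exact Finset.sum_congr rfl fun j _ => Finset.sum_congr rfl fun r _ => by ring

end Sandwich

theorem gradient_temporal_weights_general
    (N RD : ℕ)
    (A S : Matrix (Fin N) (Fin N) ℝ)
    (U : Matrix (Fin N) (Fin RD) ℝ)
    (f : (Fin RD → ℝ) → ℝ)
    (hf : ∀ v : Fin RD → ℝ,
      f v = -∑ i, ∑ j,
        (A i j * (S + U * Matrix.diagonal v * Uᵀ) i j -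
          Real.log (1 + Real.exp ((S + U * Matrix.diagonal v * Uᵀ) i j))))
    (v : Fin RD → ℝ) :
    ∃ φ : (Fin RD → ℝ) →L[ℝ] ℝ, HasFDerivAt f φ v ∧
      ∀ w : Fin RD → ℝ, φ w =
        ∑ r, (-(∑ i, ∑ j,
          U i r * ((A - logisticM (S + U * Matrix.diagonal v * Uᵀ)) i j) * U j r)) * w r := by
  have hΘ : ∀ i j, HasFDerivAt (fun v => (S + U * diagonal v * Uᵀ) i j)
      (∑ r, (U i r * U j r) • ContinuousLinearMap.proj r) v := fun i j =>
    (hasFDerivAt_mul_diagonal_mul_transpose_apply U v i j).const_add (S i j)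
  refine ⟨_, funext hf ▸ HasFDerivAt.sum_logistic_negLogLik hΘ, fun w => ?_⟩
  calc _ = -∑ i, ∑ j,
        (A - logisticM (S + U * diagonal v * Uᵀ)) i j * ∑ r, U i r * U j r * w r := by
        simp [logisticM]
    _ = _ := by rw [sum_sum_mul_sum_mul_mul U, ← Finset.sum_neg_distrib]; simp only [neg_mul]

/-- **Gradient of the negative log-likelihood with respect to the temporal weights.**
With `Θ(v) = S + U diag(v) Uᵀ` and
`f(v) = −Σ_{i,j} [A_ij Θ_ij(v) − log(1 + exp(Θ_ij(v)))]`, the function `f` is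
differentiable at every `v`, with `∂f/∂v_r = −u_rᵀ (A − σ(Θ(v))) u_r`, i.e. its gradient
is `−diag[Uᵀ(A − σ(Θ(v)))U]`. -/
theorem gradient_temporal_weights
    (N RD : ℕ)
    (A S : Matrix (Fin N) (Fin N) ℝ) (hA : A.IsSymm) (hS : S.IsSymm)
    (U : Matrix (Fin N) (Fin RD) ℝ)
    (f : (Fin RD → ℝ) → ℝ)
    (hf : ∀ v : Fin RD → ℝ,
      f v = -∑ i, ∑ j,
        (A i j * (S + U * Matrix.diagonal v * Uᵀ) i j -
          Real.log (1 + Real.exp ((S + U * Matrix.diagonal v * Uᵀ) i j))))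
    (v : Fin RD → ℝ) :
    ∃ φ : (Fin RD → ℝ) →L[ℝ] ℝ, HasFDerivAt f φ v ∧
      ∀ w : Fin RD → ℝ, φ w =
        ∑ r, (-(∑ i, ∑ j,
          U i r * ((A - logisticM (S + U * Matrix.diagonal v * Uᵀ)) i j) * U j r)) * w r :=
  gradient_temporal_weights_general N RD A S U f hf v
end
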